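/- arXiv:2602.15800 — 5 statements merged into one kernel-verified Lean document; each statement's English description precedes it below -/
import Mathlib

section
/- Let X be a diagonally symmetric matrix on (ℂ^d)^{⊗n} with diagonal tensor Q[X]_i = ⟨i|X|i⟩. For any subset A ⊆ [n], the partial trace Tr_A(X) is again diagonally symmetric (on n−|A| systems), and its diagonal tensor equals the classical marginal of Q[X]: Q[Tr_A(X)]_j = Σ_{i ∈ [d]^{|A|}} Q[X]_{j ⊔ i}. -/
open ComplexOrder

/-- The permutation operator `P_σ` on `(ℂ^d)^{⊗ι}`, sending `|i⟩` to `|i ∘ σ⁻¹⟩`. -/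
def permMatrix (ι : Type) [Fintype ι] [DecidableEq ι] (d : ℕ) (σ : Equiv.Perm ι) :
    Matrix (ι → Fin d) (ι → Fin d) ℂ :=
  Matrix.of fun a b => if a = (fun k => b (σ⁻¹ k)) then 1 else 0

/-- The orthogonal projection `Π = (1/n!) ∑_σ P_σ` onto the symmetric subspace. -/
noncomputable def symProj (ι : Type) [Fintype ι] [DecidableEq ι] (d : ℕ) :
    Matrix (ι → Fin d) (ι → Fin d) ℂ :=
  ((Nat.factorial (Fintype.card ι) : ℂ))⁻¹ • ∑ σ : Equiv.Perm ι, permMatrix ι d σ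

/-- A matrix is diagonally symmetric if it is supported on the symmetric subspace
(`Π X Π = X`) and commutes with `U^{⊗n}` for every diagonal unitary `U`. -/
def IsDS (ι : Type) [Fintype ι] [DecidableEq ι] (d : ℕ)
    (X : Matrix (ι → Fin d) (ι → Fin d) ℂ) : Prop :=
  symProj ι d * X * symProj ι d = X ∧
  ∀ θ : Fin d → ℝ,
    Matrix.diagonal (fun i : ι → Fin d => ∏ k, Complex.exp ((θ (i k) : ℂ) * Complex.I)) * X =
      X * Matrix.diagonal fun i : ι → Fin d => ∏ k, Complex.exp ((θ (i k) : ℂ) * Complex.I)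

/-- Merge an assignment on the complement of `A` with an assignment on `A` into a full
multi-index. -/
def merge {n d : ℕ} (A : Finset (Fin n)) (j : {k : Fin n // k ∉ A} → Fin d)
    (i : {k : Fin n // k ∈ A} → Fin d) : Fin n → Fin d :=
  fun k => if h : k ∈ A then i ⟨k, h⟩ else j ⟨k, h⟩

/-
Both defining conditions of a diagonally symmetric matrix are entrywise: `Π X Π = X` means
that `X a b` is invariant under permuting `a` and, separately, `b`, and commuting with
`U^{⊗n}` means `φ(a) X a b = X a b φ(b)` for the product phase `φ`. A permutation of the
systems outside `A` extends by the identity on `A` to a permutation of all systems, and the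
phase of a merged index factors over `A` and its complement, so both conditions pass to every
summand of the partial trace.
-/

namespace DiagonallySymmetric

variable {ι : Type} [Fintype ι] {d : ℕ}

/-- The eigenvalue of `U^{⊗ι}` on `|a⟩`, for the diagonal unitary `U = diag(e^{iθ})`. -/
noncomputable def tensorPhase (θ : Fin d → ℝ) (a : ι → Fin d) : ℂ :=
  ∏ k, Complex.exp (θ (a k) * Complex.I)

theorem tensorPhase_ne_zero (θ : Fin d → ℝ) (a : ι → Fin d) : tensorPhase θ a ≠ 0 :=
  Finset.prod_ne_zero_iff.mpr fun _ _ => Complex.exp_ne_zero _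

variable [DecidableEq ι]

theorem permMatrix_mul_apply (σ : Equiv.Perm ι) (X : Matrix (ι → Fin d) (ι → Fin d) ℂ)
    (a b : ι → Fin d) : (permMatrix ι d σ * X) a b = X (a ∘ σ) b := by
  have hsupp : ∀ c : ι → Fin d, (a = fun k => c (σ⁻¹ k)) ↔ c = a ∘ σ := fun c =>
    ⟨by rintro rfl; funext k; simp, by rintro rfl; funext k; simp⟩
  simp only [permMatrix, Matrix.mul_apply, Matrix.of_apply, hsupp, ite_mul, one_mul, zero_mul,
    Finset.sum_ite_eq', Finset.mem_univ, if_true]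

theorem mul_permMatrix_apply (σ : Equiv.Perm ι) (X : Matrix (ι → Fin d) (ι → Fin d) ℂ)
    (a b : ι → Fin d) : (X * permMatrix ι d σ) a b = X a (b ∘ ⇑σ⁻¹) := by
  simp [permMatrix, Matrix.mul_apply, Function.comp_def]

theorem permMatrix_mul_permMatrix (σ τ : Equiv.Perm ι) :
    permMatrix ι d σ * permMatrix ι d τ = permMatrix ι d (σ * τ) := by
  ext a b
  rw [permMatrix_mul_apply]
  simp only [permMatrix, Matrix.of_apply]
  congr 1
  refine propext ⟨fun h => funext fun k => by simpa using congrFun h (σ⁻¹ k), fun h => ?_⟩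
  funext k
  simp [h, Equiv.Perm.mul_apply]

theorem permMatrix_mul_symProj (σ : Equiv.Perm ι) :
    permMatrix ι d σ * symProj ι d = symProj ι d := by
  rw [symProj, Matrix.mul_smul, Finset.mul_sum]
  simp_rw [permMatrix_mul_permMatrix]
  exact congrArg _ (Equiv.sum_comp (Equiv.mulLeft σ) fun τ => permMatrix ι d τ)

theorem symProj_mul_permMatrix (σ : Equiv.Perm ι) :
    symProj ι d * permMatrix ι d σ = symProj ι d := by
  rw [symProj, Matrix.smul_mul, Finset.sum_mul]
  simp_rw [permMatrix_mul_permMatrix]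
  exact congrArg _ (Equiv.sum_comp (Equiv.mulRight σ) fun τ => permMatrix ι d τ)

theorem factorial_inv_smul_sum_const (M : Matrix (ι → Fin d) (ι → Fin d) ℂ) :
    ((Fintype.card ι).factorial : ℂ)⁻¹ • ∑ _σ : Equiv.Perm ι, M = M := by
  rw [Finset.sum_const, Finset.card_univ, Fintype.card_perm, ← Nat.cast_smul_eq_nsmul ℂ,
    smul_smul, inv_mul_cancel₀ (by exact_mod_cast (Fintype.card ι).factorial_ne_zero),
    one_smul]

theorem symProj_mul_eq_self_iff {X : Matrix (ι → Fin d) (ι → Fin d) ℂ} :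
    symProj ι d * X = X ↔ ∀ σ, permMatrix ι d σ * X = X := by
  refine ⟨fun h σ => by rw [← h, ← Matrix.mul_assoc, permMatrix_mul_symProj], fun h => ?_⟩
  rw [symProj, Matrix.smul_mul, Finset.sum_mul]
  simp_rw [h]
  exact factorial_inv_smul_sum_const X

theorem mul_symProj_eq_self_iff {X : Matrix (ι → Fin d) (ι → Fin d) ℂ} :
    X * symProj ι d = X ↔ ∀ σ, X * permMatrix ι d σ = X := by
  refine ⟨fun h σ => by rw [← h, Matrix.mul_assoc, symProj_mul_permMatrix], fun h => ?_⟩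
  rw [symProj, Matrix.mul_smul, Finset.mul_sum]
  simp_rw [h]
  exact factorial_inv_smul_sum_const X

theorem symProj_mul_mul_symProj_eq_self_iff {X : Matrix (ι → Fin d) (ι → Fin d) ℂ} :
    symProj ι d * X * symProj ι d = X ↔
      (∀ σ : Equiv.Perm ι, ∀ a b, X (a ∘ σ) b = X a b) ∧
        ∀ σ : Equiv.Perm ι, ∀ a b, X a (b ∘ σ) = X a b := by
  have hleft : symProj ι d * X = X ↔ ∀ σ : Equiv.Perm ι, ∀ a b, X (a ∘ σ) b = X a b := by
    rw [symProj_mul_eq_self_iff]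
    simp only [← Matrix.ext_iff, permMatrix_mul_apply]
  have hright : X * symProj ι d = X ↔ ∀ σ : Equiv.Perm ι, ∀ a b, X a (b ∘ σ) = X a b := by
    rw [mul_symProj_eq_self_iff]
    simp only [← Matrix.ext_iff, mul_permMatrix_apply]
    exact inv_involutive.surjective.forall
  rw [← hleft, ← hright]
  refine ⟨fun h => ⟨?_, ?_⟩, fun ⟨hl, hr⟩ => by rw [hl, hr]⟩
  · rw [symProj_mul_eq_self_iff]
    intro σ
    rw [← h, ← Matrix.mul_assoc, ← Matrix.mul_assoc, permMatrix_mul_symProj]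
  · rw [mul_symProj_eq_self_iff]
    intro σ
    rw [← h, Matrix.mul_assoc, symProj_mul_permMatrix]

theorem isDS_iff {X : Matrix (ι → Fin d) (ι → Fin d) ℂ} :
    IsDS ι d X ↔
      ((∀ σ : Equiv.Perm ι, ∀ a b, X (a ∘ σ) b = X a b) ∧
        ∀ σ : Equiv.Perm ι, ∀ a b, X a (b ∘ σ) = X a b) ∧
      ∀ θ a b, tensorPhase θ a * X a b = X a b * tensorPhase θ b := by
  rw [IsDS, symProj_mul_mul_symProj_eq_self_iff]
  simp only [← Matrix.ext_iff, Matrix.diagonal_mul, Matrix.mul_diagonal, tensorPhase]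

end DiagonallySymmetric

open DiagonallySymmetric

section PartialTrace

variable {n d : ℕ} (A : Finset (Fin n))

def partialTrace (X : Matrix (Fin n → Fin d) (Fin n → Fin d) ℂ) :
    Matrix ({k : Fin n // k ∉ A} → Fin d) ({k : Fin n // k ∉ A} → Fin d) ℂ :=
  Matrix.of fun j j' => ∑ i : {k : Fin n // k ∈ A} → Fin d, X (merge A j i) (merge A j' i)

theorem merge_comp_perm (τ : Equiv.Perm {k : Fin n // k ∉ A})
    (j : {k : Fin n // k ∉ A} → Fin d) (i : {k : Fin n // k ∈ A} → Fin d) :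
    merge A (j ∘ τ) i = merge A j i ∘ Equiv.Perm.subtypeCongr 1 τ := by
  funext k
  by_cases hk : k ∈ A
  · simp [merge, hk, Equiv.Perm.subtypeCongr.left_apply]
  · simp [merge, hk, Equiv.Perm.subtypeCongr.right_apply, (τ ⟨k, hk⟩).property]

theorem tensorPhase_merge (θ : Fin d → ℝ) (j : {k : Fin n // k ∉ A} → Fin d)
    (i : {k : Fin n // k ∈ A} → Fin d) :
    tensorPhase θ (merge A j i) = tensorPhase θ i * tensorPhase θ j := by
  rw [tensorPhase, ← Finset.prod_mul_prod_compl A,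
    Finset.prod_subtype A (fun _ => Iff.rfl), Finset.prod_subtype Aᶜ (fun _ => Finset.mem_compl)]
  congr 1 <;> refine Finset.prod_congr rfl fun s _ => ?_ <;> simp [merge, s.property]

theorem IsDS.partialTrace {X : Matrix (Fin n → Fin d) (Fin n → Fin d) ℂ}
    (hX : IsDS (Fin n) d X) : IsDS {k : Fin n // k ∉ A} d (partialTrace A X) := by
  obtain ⟨⟨hleft, hright⟩, hphase⟩ := isDS_iff.mp hX
  refine isDS_iff.mpr ⟨⟨fun τ j j' => ?_, fun τ j j' => ?_⟩, fun θ j j' => ?_⟩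
  · simp only [_root_.partialTrace, Matrix.of_apply, merge_comp_perm, hleft]
  · simp only [_root_.partialTrace, Matrix.of_apply, merge_comp_perm, hright]
  · simp only [_root_.partialTrace, Matrix.of_apply, Finset.mul_sum, Finset.sum_mul]
    refine Finset.sum_congr rfl fun i _ => mul_left_cancel₀ (tensorPhase_ne_zero θ i) ?_
    have := hphase θ (merge A j i) (merge A j' i)
    rw [tensorPhase_merge, tensorPhase_merge] at this
    linear_combination this

end PartialTrace

/-- the partial trace over a subset `A` of systems of a diagonally symmetric
matrix is again diagonally symmetric, and its diagonal tensor is the classical marginal of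
the diagonal tensor of `X`. -/
theorem stmt_8 (n d : ℕ) (X : Matrix (Fin n → Fin d) (Fin n → Fin d) ℂ)
    (hX : IsDS (Fin n) d X) (A : Finset (Fin n)) :
    IsDS {k : Fin n // k ∉ A} d
        (Matrix.of fun j j' : {k : Fin n // k ∉ A} → Fin d =>
          ∑ i : {k : Fin n // k ∈ A} → Fin d, X (merge A j i) (merge A j' i)) ∧
      ∀ j : {k : Fin n // k ∉ A} → Fin d,
        (Matrix.of fun j j' : {k : Fin n // k ∉ A} → Fin d =>
            ∑ i : {k : Fin n // k ∈ A} → Fin d, X (merge A j i) (merge A j' i)) j j =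
          ∑ i : {k : Fin n // k ∈ A} → Fin d, X (merge A j i) (merge A j i) :=
  ⟨hX.partialTrace A, fun _ => rfl⟩
end

section
/- A diagonally symmetric state X on two qudits (n = 2, local dimension d) is PPT if and only if its diagonal tensor Q[X], viewed as a d × d matrix Q_{ij} = ⟨ij|X|ij⟩, is doubly non-negative: entrywise non-negative and positive semidefinite. -/
open ComplexOrder

/-- The partial transpose over the tensor factors indexed by `I`. -/
def ptranspose {n d : ℕ} (I : Finset (Fin n))
    (ρ : Matrix (Fin n → Fin d) (Fin n → Fin d) ℂ) :
    Matrix (Fin n → Fin d) (Fin n → Fin d) ℂ :=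
  Matrix.of fun a b =>
    ρ (fun k => if k ∈ I then b k else a k) (fun k => if k ∈ I then a k else b k)

/-! Since `P_σ Π = Π`, the condition `Π X Π = X` makes `X` invariant under swapping the two
factors, and commuting with every `U ⊗ U`, `U` diagonal unitary, forces `⟨ab|X|cd⟩ = 0`
unless `{a, b} = {c, d}` as multisets. Hence `X^Γ` is the sum of a diagonal matrix, carrying
the nonnegative weights `⟨ij|X|ij⟩` (`i ≠ j`) on `|ij⟩`, and of `V Q Vᴴ` with `V |i⟩ = |ii⟩`;
conversely `Q` is the compression of `X^Γ` to the span of the `|ii⟩`. The entries of `Q` are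
diagonal entries of `X`, so they are nonnegative for any state. -/

open Matrix Complex

theorem Matrix.PosSemidef.map_ofReal {n : Type*} [Fintype n] {A : Matrix n n ℝ}
    (hA : A.PosSemidef) : (A.map ((↑) : ℝ → ℂ)).PosSemidef := by
  obtain ⟨m, v, rfl⟩ := posSemidef_iff_eq_sum_vecMulVec.mp hA
  refine posSemidef_iff_eq_sum_vecMulVec.mpr ⟨m, fun i j => v i j, ?_⟩
  ext
  simp [vecMulVec_apply, Matrix.sum_apply]

theorem Matrix.PosSemidef.of_map_ofReal {n : Type*} [Fintype n] {A : Matrix n n ℝ}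
    (hA : (A.map ((↑) : ℝ → ℂ)).PosSemidef) : A.PosSemidef := by
  rw [posSemidef_iff_dotProduct_mulVec] at hA ⊢
  refine ⟨?_, fun x => ?_⟩
  · ext i j
    simpa using congr_fun₂ hA.1 i j
  · rw [← Complex.zero_le_real]
    convert hA.2 (fun i => x i) using 1
    simp [dotProduct, mulVec]

theorem Complex.eq_of_forall_exp_mul_I_eq {x y : ℝ}
    (h : ∀ t : ℝ, exp (↑(t * x) * I) = exp (↑(t * y) * I)) : x = y := by
  by_contra hxy
  have hxy' : (x : ℂ) - y ≠ 0 := by exact_mod_cast sub_ne_zero.mpr hxy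
  have ht := h (Real.pi / (x - y))
  rw [show (↑(Real.pi / (x - y) * x) : ℂ) * I = ↑(Real.pi / (x - y) * y) * I + Real.pi * I by
    push_cast; field_simp; ring, exp_add, exp_pi_mul_I] at ht
  exact exp_ne_zero _ (by linear_combination -ht / 2)

theorem prod_exp_single_mul_I {ι : Type} [Fintype ι] {d : ℕ} (m : Fin d) (t : ℝ)
    (a : ι → Fin d) :
    ∏ k, exp (↑((Pi.single m t : Fin d → ℝ) (a k)) * I) =
      exp (↑(t * Multiset.count m (Finset.univ.val.map a)) * I) := by
  have : ∑ k, (Pi.single m t : Fin d → ℝ) (a k) =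
      t * Multiset.count m (Finset.univ.val.map a) := by
    simp only [Pi.single_apply, Finset.sum_ite, Finset.sum_const_zero, add_zero, Finset.sum_const,
      nsmul_eq_mul, Multiset.count_map, eq_comm (a := m), mul_comm t]
    rfl
  rw [← this, ← exp_sum, ← Finset.sum_mul]
  push_cast
  rfl

section DiagonallySymmetric

variable {ι : Type} [Fintype ι] [DecidableEq ι] {d : ℕ}

theorem permMatrix_mul_apply (σ : Equiv.Perm ι) (M : Matrix (ι → Fin d) (ι → Fin d) ℂ)
    (a b : ι → Fin d) : (permMatrix ι d σ * M) a b = M (a ∘ σ) b := by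
  have hcond (c : ι → Fin d) : a = c ∘ σ.symm ↔ c = a ∘ σ := by
    rw [Equiv.eq_comp_symm, eq_comm]
  simp [mul_apply, permMatrix, ← Function.comp_def, hcond]

theorem permMatrix_mul_permMatrix (σ τ : Equiv.Perm ι) :
    permMatrix ι d σ * permMatrix ι d τ = permMatrix ι d (σ * τ) := by
  ext a b
  rw [permMatrix_mul_apply]
  simp only [permMatrix, of_apply, ← Function.comp_def, _root_.mul_inv_rev,
    Equiv.Perm.coe_mul, Equiv.Perm.inv_def, ← Function.comp_assoc, Equiv.eq_comp_symm]

theorem permMatrix_mul_symProj (σ : Equiv.Perm ι) :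
    permMatrix ι d σ * symProj ι d = symProj ι d := by
  rw [symProj, Matrix.mul_smul, Finset.mul_sum]
  simp only [permMatrix_mul_permMatrix]
  exact congrArg _ (Equiv.sum_comp (Equiv.mulLeft σ) (permMatrix ι d))

variable {X : Matrix (ι → Fin d) (ι → Fin d) ℂ}

theorem IsDS.permMatrix_mul (hX : IsDS ι d X) (σ : Equiv.Perm ι) :
    permMatrix ι d σ * X = X := by
  rw [← hX.1, ← mul_assoc, ← mul_assoc, permMatrix_mul_symProj]

theorem IsDS.apply_comp_left (hX : IsDS ι d X) (σ : Equiv.Perm ι) (a b : ι → Fin d) :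
    X (a ∘ σ) b = X a b := by
  simpa [permMatrix_mul_apply] using congr_fun₂ (hX.permMatrix_mul σ) a b

theorem IsDS.apply_eq_zero_of_map_ne (hX : IsDS ι d X) {a b : ι → Fin d}
    (hab : Finset.univ.val.map a ≠ Finset.univ.val.map b) : X a b = 0 := by
  obtain ⟨m, hm⟩ : ∃ m, Multiset.count m (Finset.univ.val.map a) ≠
      Multiset.count m (Finset.univ.val.map b) := by
    by_contra! h; exact hab (Multiset.ext.mpr h)
  by_contra hX0
  refine hm (Nat.cast_injective (R := ℝ) (Complex.eq_of_forall_exp_mul_I_eq fun t => ?_))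
  have := congr_fun₂ (hX.2 (Pi.single m t)) a b
  rw [diagonal_mul, mul_diagonal, prod_exp_single_mul_I, prod_exp_single_mul_I,
    mul_comm (X a b)] at this
  exact mul_right_cancel₀ hX0 this

end DiagonallySymmetric

section TwoQudits

variable {d : ℕ}

theorem map_univ_val_pair_eq_iff {α : Type*} {p q r s : α} :
    Finset.univ.val.map ![p, q] = Finset.univ.val.map ![r, s] ↔
      (p = r ∧ q = s) ∨ (p = s ∧ q = r) := by
  simp [Fin.univ_val_map, List.ofFn_succ, List.perm_pair]

theorem vecCons_two_comp_swap {α : Type*} (p q : α) : ![p, q] ∘ Equiv.swap 0 1 = ![q, p] := by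
  ext k; fin_cases k <;> rfl

theorem ptranspose_zero_apply (X : Matrix (Fin 2 → Fin d) (Fin 2 → Fin d) ℂ)
    (a b : Fin 2 → Fin d) :
    ptranspose {0} X a b = X ![b 0, a 1] ![a 0, b 1] := by
  simp only [ptranspose, of_apply]
  congr 1 <;> ext k <;> fin_cases k <;> rfl

def diagTensor (X : Matrix (Fin 2 → Fin d) (Fin 2 → Fin d) ℂ) : Matrix (Fin d) (Fin d) ℂ :=
  of fun i j => X ![i, j] ![i, j]

def copyIsometry (d : ℕ) : Matrix (Fin 2 → Fin d) (Fin d) ℂ :=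
  of fun a i => if a 0 = i ∧ a 1 = i then 1 else 0

theorem copyIsometry_mul_mul_conjTranspose_apply (Q : Matrix (Fin d) (Fin d) ℂ)
    (a b : Fin 2 → Fin d) :
    (copyIsometry d * Q * (copyIsometry d)ᴴ) a b =
      if a 0 = a 1 ∧ b 0 = b 1 then Q (a 0) (b 0) else 0 := by
  by_cases ha : a 0 = a 1 <;> by_cases hb : b 0 = b 1 <;>
    simp [copyIsometry, mul_apply, conjTranspose_apply, apply_ite (star : ℂ → ℂ), ite_and,
      ha, hb, eq_comm]

variable {X : Matrix (Fin 2 → Fin d) (Fin 2 → Fin d) ℂ}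

theorem IsDS.apply_swap_left (hX : IsDS (Fin 2) d X) (i j : Fin d) (b : Fin 2 → Fin d) :
    X ![j, i] b = X ![i, j] b := by
  rw [← vecCons_two_comp_swap, hX.apply_comp_left]

theorem IsDS.ptranspose_eq (hX : IsDS (Fin 2) d X) :
    ptranspose {0} X = diagonal (fun a => if a 0 = a 1 then 0 else X a a) +
      copyIsometry d * diagTensor X * (copyIsometry d)ᴴ := by
  ext a b
  rw [Matrix.add_apply, ptranspose_zero_apply, copyIsometry_mul_mul_conjTranspose_apply,
    diagonal_apply]
  by_cases hc : a 0 = a 1 ∧ b 0 = b 1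
  · obtain ⟨ha, hb⟩ := hc
    simp only [ha, hb, and_self, if_true, diagTensor, of_apply, ite_self, zero_add]
    exact hX.apply_swap_left _ _ _
  by_cases hab : a = b
  · subst hab
    have ha : a 0 ≠ a 1 := fun h => hc ⟨h, h⟩
    have ha_eta : ![a 0, a 1] = a := by ext k; fin_cases k <;> rfl
    simp only [ha, ha_eta, and_self, if_true, if_false, add_zero]
  · simp only [hab, hc, if_false, add_zero]
    refine hX.apply_eq_zero_of_map_ne fun h => ?_
    rcases map_univ_val_pair_eq_iff.mp h with ⟨h0, h1⟩ | ⟨h0, h1⟩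
    · exact hab (funext (Fin.forall_fin_two.2 ⟨h0.symm, h1⟩))
    · exact hc ⟨h1.symm, h0⟩

theorem IsDS.diagTensor_eq_submatrix_ptranspose (hX : IsDS (Fin 2) d X) :
    diagTensor X =
      (ptranspose {0} X).submatrix (fun i => ![i, i]) (fun i => ![i, i]) := by
  ext i j
  rw [submatrix_apply, ptranspose_zero_apply]
  exact (hX.apply_swap_left i j _).symm

end TwoQudits

/-- a diagonally symmetric two-qudit state `X` is PPT iff the `d × d` matrix
`Q_{ij} = ⟨ij|X|ij⟩` is doubly non-negative (entrywise non-negative and PSD). -/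
theorem stmt_11 (d : ℕ) (X : Matrix (Fin 2 → Fin d) (Fin 2 → Fin d) ℂ)
    (hDS : IsDS (Fin 2) d X) (hstate : X.PosSemidef) :
    (X.PosSemidef ∧ (ptranspose ({0} : Finset (Fin 2)) X).PosSemidef) ↔
      ((∀ i j : Fin d, 0 ≤ (X ![i, j] ![i, j]).re) ∧
        (Matrix.of fun i j : Fin d => (X ![i, j] ![i, j]).re).PosSemidef) := by
  have hdiag (a : Fin 2 → Fin d) : 0 ≤ X a a := hstate.diag_nonneg
  have hQ : (of fun i j : Fin d => (X ![i, j] ![i, j]).re).map ((↑) : ℝ → ℂ) =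
      diagTensor X := by
    ext i j
    exact (Complex.eq_re_of_ofReal_le (r := 0) (by exact_mod_cast hdiag _)).symm
  constructor
  · rintro ⟨-, hΓ⟩
    refine ⟨fun i j => (Complex.nonneg_iff.mp (hdiag _)).1, PosSemidef.of_map_ofReal ?_⟩
    rw [hQ, hDS.diagTensor_eq_submatrix_ptranspose]
    exact hΓ.submatrix _
  · rintro ⟨-, hQpsd⟩
    have hQc : (diagTensor X).PosSemidef := hQ ▸ PosSemidef.map_ofReal hQpsd
    refine ⟨hstate, ?_⟩
    rw [hDS.ptranspose_eq]
    refine .add (.diagonal fun a => ?_) (hQc.mul_mul_conjTranspose_same _)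
    split_ifs
    exacts [le_rfl, hdiag a]
end

section
/- A diagonally symmetric n-partite matrix X is separable (a non-negative combination of |v⟩⟨v|^{⊗n}) if and only if the symmetric tensor Q[X] with Q[X]_i = ⟨i|X|i⟩ is completely positive, i.e., a finite sum of tensor powers v^{⊗n} of entrywise non-negative vectors v ∈ ℝ_+^d. -/
/-!
A diagonally symmetric `X` is determined by its diagonal: invariance under the phases `U^{⊗n}`
forces `X a b = 0` unless the multi-indices `a`, `b` have the same occupation numbers, and
invariance under permutations of the factors gives `X a b = X a a` when they do. The diagonal of
`|v^{⊗n}⟩⟨v^{⊗n}|` is `|v|^{⊗n}`, which gives one direction. Conversely, averaging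
`|v^{⊗n}⟩⟨v^{⊗n}|` over the phase vectors `v ⊙ ζ^m`, `m ∈ (ℤ/N)^d` with `N > n`, kills exactly
the entries with different occupation numbers, so twirling `(√w)^{⊗n}` over all phases and
summing over the completely positive decomposition of `Q[X]` reproduces `X`.
-/

open ComplexOrder

open Finset Complex
open ZMod (stdAddChar)

section Occupation

variable {ι α : Type*} [Fintype ι] [DecidableEq α]

def occupation (a : ι → α) (j : α) : ℕ := #{k | a k = j}

lemma occupation_le (a : ι → α) (j : α) : occupation a j ≤ Fintype.card ι :=
  card_filter_le _ _

lemma prod_comp_eq_prod_pow_occupation [Fintype α] {M : Type*} [CommMonoid M] (a : ι → α)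
    (f : α → M) : ∏ k, f (a k) = ∏ j, f j ^ occupation a j := by
  rw [← prod_fiberwise' univ a f]
  simp [occupation, prod_const]

lemma exists_perm_of_occupation_eq {a b : ι → α} (h : occupation a = occupation b) :
    ∃ σ : Equiv.Perm ι, b = a ∘ σ := by
  have hcard (j : α) : Fintype.card {k // b k = j} = Fintype.card {k // a k = j} := by
    simp only [Fintype.card_subtype]
    exact (congrFun h j).symm
  let e (j : α) : {k // b k = j} ≃ {k // a k = j} := Fintype.equivOfCardEq (hcard j)
  refine ⟨((Equiv.sigmaFiberEquiv b).symm.trans (Equiv.sigmaCongrRight e)).trans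
    (Equiv.sigmaFiberEquiv a), funext fun k => ?_⟩
  exact (e (b k) ⟨k, rfl⟩).2.symm

lemma natCast_occupation_inj {N : ℕ} (hN : Fintype.card ι < N) {a b : ι → α} {j : α} :
    (occupation a j : ZMod N) = occupation b j ↔ occupation a j = occupation b j := by
  rw [ZMod.natCast_eq_natCast_iff', Nat.mod_eq_of_lt ((occupation_le a j).trans_lt hN),
    Nat.mod_eq_of_lt ((occupation_le b j).trans_lt hN)]

end Occupation

section SymmetricSubspace

variable {ι : Type} [Fintype ι] [DecidableEq ι] {d : ℕ}

lemma mul_permMatrix_apply (M : Matrix (ι → Fin d) (ι → Fin d) ℂ) (τ : Equiv.Perm ι)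
    (a b : ι → Fin d) : (M * permMatrix ι d τ) a b = M a (fun k => b (τ⁻¹ k)) := by
  simp [Matrix.mul_apply, permMatrix]

lemma symProj_mul_permMatrix (τ : Equiv.Perm ι) :
    symProj ι d * permMatrix ι d τ = symProj ι d := by
  ext a b
  rw [mul_permMatrix_apply]
  simp only [symProj, Matrix.smul_apply, Matrix.sum_apply, permMatrix, Matrix.of_apply]
  congr 1
  exact Fintype.sum_equiv (Equiv.mulRight τ) _ _ fun σ => by simp [Equiv.Perm.mul_apply]

lemma mul_permMatrix_of_symProj_conj {X : Matrix (ι → Fin d) (ι → Fin d) ℂ}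
    (hX : symProj ι d * X * symProj ι d = X) (τ : Equiv.Perm ι) : X * permMatrix ι d τ = X := by
  rw [← hX, Matrix.mul_assoc, symProj_mul_permMatrix]

lemma apply_comp_perm_of_symProj_conj {X : Matrix (ι → Fin d) (ι → Fin d) ℂ}
    (hX : symProj ι d * X * symProj ι d = X) (a b : ι → Fin d) (σ : Equiv.Perm ι) :
    X a (b ∘ σ) = X a b := by
  simpa [mul_permMatrix_apply, Function.comp_def] using
    congrFun (congrFun (mul_permMatrix_of_symProj_conj hX σ⁻¹) a) b

end SymmetricSubspace

section DiagonalUnitary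

variable {ι : Type} [Fintype ι] [DecidableEq ι] {d : ℕ}

lemma apply_eq_zero_of_occupation_ne {X : Matrix (ι → Fin d) (ι → Fin d) ℂ}
    (hU : ∀ θ : Fin d → ℝ,
      Matrix.diagonal (fun i : ι → Fin d => ∏ k, exp ((θ (i k) : ℂ) * I)) * X =
        X * Matrix.diagonal fun i : ι → Fin d => ∏ k, exp ((θ (i k) : ℂ) * I))
    {a b : ι → Fin d} (h : occupation a ≠ occupation b) : X a b = 0 := by
  obtain ⟨j, hj⟩ := Function.ne_iff.mp h
  set N := Fintype.card ι + 1
  set θ : Fin d → ℝ := Pi.single j (2 * Real.pi / N)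
  have hphase (c : ι → Fin d) :
      ∏ k, exp ((θ (c k) : ℂ) * I) = stdAddChar (occupation c j : ZMod N) := by
    rw [prod_comp_eq_prod_pow_occupation c fun j' => exp ((θ j' : ℂ) * I),
      prod_eq_single j (fun j' _ hj' => by simp [θ, hj']) (by simp), ← nsmul_one,
      AddChar.map_nsmul_eq_pow, ← Int.cast_one, ZMod.stdAddChar_coe]
    simp only [θ, Pi.single_eq_same]
    push_cast
    ring_nf
  have hcomm := congrFun (congrFun (hU θ) a) b
  rw [Matrix.diagonal_mul, Matrix.mul_diagonal, hphase, hphase, mul_comm] at hcomm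
  by_contra hab
  have := ZMod.injective_stdAddChar (mul_left_cancel₀ hab hcomm)
  exact hj ((natCast_occupation_inj (Nat.lt_succ_self _)).mp this)

end DiagonalUnitary

section Twirl

variable {ι α : Type*} [Fintype ι] [Fintype α] [DecidableEq α] {N : ℕ} [NeZero N]

lemma sum_stdAddChar_mul_star (hN : Fintype.card ι < N) (a b : ι → α) :
    ∑ m : α → ZMod N, (∏ k, stdAddChar (m (a k))) * star (∏ k, stdAddChar (m (b k)))
      = if occupation a = occupation b then (N : ℂ) ^ Fintype.card α else 0 := by
  have hterm (m : α → ZMod N) :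
      (∏ k, stdAddChar (m (a k))) * star (∏ k, stdAddChar (m (b k))) =
        ∏ j, stdAddChar (m j * ((occupation a j : ZMod N) - (occupation b j : ZMod N))) := by
    rw [prod_comp_eq_prod_pow_occupation a fun j => stdAddChar (m j),
      prod_comp_eq_prod_pow_occupation b fun j => stdAddChar (m j), star_prod,
      ← prod_mul_distrib]
    refine prod_congr rfl fun j _ => ?_
    rw [mul_sub, sub_eq_add_neg, AddChar.map_add_eq_mul, AddChar.map_neg_eq_conj, star_pow,
      ← Complex.star_def, mul_comm (m j), mul_comm (m j), ← nsmul_eq_mul, ← nsmul_eq_mul,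
      AddChar.map_nsmul_eq_pow, AddChar.map_nsmul_eq_pow, star_pow]
  simp only [hterm]
  rw [← Fintype.prod_sum fun j (t : ZMod N) =>
    stdAddChar (t * ((occupation a j : ZMod N) - (occupation b j : ZMod N)))]
  simp only [AddChar.sum_mulShift _ (ZMod.isPrimitive_stdAddChar N),
    sub_eq_zero, natCast_occupation_inj hN, ZMod.card, Nat.cast_ite, Nat.cast_zero, prod_ite_zero,
    mem_univ, true_implies, funext_iff, prod_const, card_univ]

lemma sum_prod_mul_stdAddChar_mul_star (hN : Fintype.card ι < N) (r : α → ℂ) (a b : ι → α) :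
    ∑ m : α → ZMod N, (∏ k, r (a k) * stdAddChar (m (a k))) *
        star (∏ k, r (b k) * stdAddChar (m (b k)))
      = if occupation a = occupation b then
          (N : ℂ) ^ Fintype.card α * ∏ k, (normSq (r (a k)) : ℂ) else 0 := by
  simp only [prod_mul_distrib, star_mul', mul_mul_mul_comm _ _ (star _), ← mul_sum,
    sum_stdAddChar_mul_star hN, mul_ite, mul_zero]
  split_ifs with h
  · rw [prod_comp_eq_prod_pow_occupation b r, ← h, ← prod_comp_eq_prod_pow_occupation a r,
      star_def, mul_conj, map_prod, ofReal_prod, mul_comm]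
  · rfl

end Twirl

lemma IsDS.apply_eq_ite {ι : Type} [Fintype ι] [DecidableEq ι] {d : ℕ}
    {X : Matrix (ι → Fin d) (ι → Fin d) ℂ} (hX : IsDS ι d X) (a b : ι → Fin d) :
    X a b = if occupation a = occupation b then X a a else 0 := by
  split_ifs with h
  · obtain ⟨σ, rfl⟩ := exists_perm_of_occupation_eq h
    exact apply_comp_perm_of_symProj_conj hX.1 a a σ
  · exact apply_eq_zero_of_occupation_ne hX.2 h

lemma diag_sum_tensorPower {n d K : ℕ} (v : Fin K → Fin d → ℂ) (i : Fin n → Fin d) :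
    (∑ q, Matrix.of fun a b : Fin n → Fin d => (∏ k, v q (a k)) * star (∏ k, v q (b k))) i i =
      ((∑ q, ∏ k, normSq (v q (i k)) : ℝ) : ℂ) := by
  rw [Matrix.sum_apply, ofReal_sum]
  refine sum_congr rfl fun q _ => ?_
  rw [Matrix.of_apply, star_def, mul_conj, map_prod, ofReal_prod]

-- The phases live in `ZMod N` with `N = 4 ^ n > n`; since `N ^ d = (2 ^ d) ^ (2 * n)`, the
-- amplitude `√w / 2 ^ d` normalises the average over `N ^ d` phases without taking roots.
lemma IsDS.eq_sum_twirl {n d K : ℕ} {X : Matrix (Fin n → Fin d) (Fin n → Fin d) ℂ}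
    (hX : IsDS (Fin n) d X) {w : Fin K → Fin d → ℝ} (hw : ∀ q i, 0 ≤ w q i)
    (hdiag : ∀ i : Fin n → Fin d, X i i = ((∑ q, ∏ k, w q (i k) : ℝ) : ℂ)) :
    X = ∑ p : Fin K × (Fin d → ZMod (4 ^ n)), Matrix.of fun a b : Fin n → Fin d =>
      (∏ k, ((√(w p.1 (a k)) / 2 ^ d : ℝ) : ℂ) * stdAddChar (p.2 (a k))) *
        star (∏ k, ((√(w p.1 (b k)) / 2 ^ d : ℝ) : ℂ) * stdAddChar (p.2 (b k))) := by
  have hN : Fintype.card (Fin n) < 4 ^ n := by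
    simpa using Nat.lt_pow_self (by norm_num : 1 < 4)
  have hnormSq (q : Fin K) (j : Fin d) :
      (normSq ((√(w q j) / 2 ^ d : ℝ) : ℂ) : ℂ) = w q j / 4 ^ d := by
    rw [normSq_ofReal, div_mul_div_comm, Real.mul_self_sqrt (hw q j), ← mul_pow]
    push_cast
    norm_num
  ext a b
  rw [hX.apply_eq_ite, Matrix.sum_apply, Fintype.sum_prod_type]
  simp only [Matrix.of_apply]
  rw [sum_congr rfl fun q _ =>
    sum_prod_mul_stdAddChar_mul_star hN (fun j => ((√(w q j) / 2 ^ d : ℝ) : ℂ)) a b]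
  split_ifs
  · rw [hdiag, ofReal_sum]
    refine sum_congr rfl fun q _ => ?_
    simp only [hnormSq, prod_div_distrib, prod_const, card_univ, Fintype.card_fin, ofReal_prod]
    push_cast
    field_simp
    ring
  · simp

/-- a diagonally symmetric `n`-partite matrix `X` is separable (a non-negative
combination of `|v⟩⟨v|^{⊗n}`) iff the symmetric tensor `Q[X]_i = ⟨i|X|i⟩` is completely
positive, i.e. a finite sum of tensor powers `w^{⊗n}` of entrywise non-negative vectors. -/
theorem stmt_13 (n d : ℕ) (X : Matrix (Fin n → Fin d) (Fin n → Fin d) ℂ)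
    (hDS : IsDS (Fin n) d X) :
    (∃ (K : ℕ) (v : Fin K → Fin d → ℂ),
        X = ∑ q, Matrix.of fun a b : Fin n → Fin d =>
          (∏ k, v q (a k)) * star (∏ k, v q (b k))) ↔
      ∃ (K : ℕ) (w : Fin K → Fin d → ℝ), (∀ q i, 0 ≤ w q i) ∧
        ∀ i : Fin n → Fin d, X i i = ((∑ q, ∏ k, w q (i k) : ℝ) : ℂ) := by
  constructor
  · rintro ⟨K, v, rfl⟩
    exact ⟨K, fun q j => normSq (v q j), fun q j => normSq_nonneg _, diag_sum_tensorPower v⟩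
  · rintro ⟨K, w, hw, hdiag⟩
    let v (p : Fin K × (Fin d → ZMod (4 ^ n))) (j : Fin d) : ℂ :=
      ((√(w p.1 j) / 2 ^ d : ℝ) : ℂ) * stdAddChar (p.2 j)
    exact ⟨_, v ∘ (Fintype.equivFin _).symm,
      (hDS.eq_sum_twirl hw hdiag).trans (Equiv.sum_comp _ _).symm⟩
end

section
/- The Motzkin polynomial M(x,y,z) = x^4 y^2 + x^2 y^4 + z^6 − 3 x^2 y^2 z^2 is non-negative on all of ℝ^3 but is not a sum of squares of real polynomials. -/
/-!
Non-negativity is AM–GM for the monomials `x⁴y²`, `x²y⁴`, `z⁶`, whose geometric mean is `x²y²z²`.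

If `M = ∑ fᵢ²`, every monomial of every `fᵢ` lies in half the Newton polytope of `M`: for any
weight, a monomial `m` of maximal weight among those of the `fᵢ` (ties broken lexicographically)
is not the midpoint of two others, so the coefficient of `m²` in `∑ fᵢ²` is `∑ coeff_m(fᵢ)² > 0`.
The only lattice points of half the Newton polytope of `M` are `x²y`, `xy²`, `xyz`, `z³`, and
`xyz · xyz` is their only product equal to `x²y²z²`; hence the coefficient `-3` of `x²y²z²` in
`M` would be a sum of squares.
-/

open MvPolynomial Finset

section NewtonPolytope

variable {σ R ι : Type*}

theorem coeff_add_self_sq [CommSemiring R] (f : MvPolynomial σ R) {m : σ →₀ ℕ}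
    (hm : ∀ a ∈ f.support, ∀ b ∈ f.support, a + b = m + m → a = m) :
    coeff (m + m) (f ^ 2) = coeff m f ^ 2 := by
  classical
  rw [sq, coeff_mul, sq]
  refine sum_eq_single (m, m) (fun p hp hne => ?_)
    (fun h => (h (HasAntidiagonal.mem_antidiagonal.2 rfl)).elim)
  rw [HasAntidiagonal.mem_antidiagonal] at hp
  by_contra hz
  have h₁ : p.1 ∈ f.support := mem_support_iff.2 (left_ne_zero_of_mul hz)
  have h₂ : p.2 ∈ f.support := mem_support_iff.2 (right_ne_zero_of_mul hz)
  have e₁ : p.1 = m := hm _ h₁ _ h₂ hp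
  exact hne (Prod.ext e₁ (add_left_cancel (e₁ ▸ hp)))

theorem coeff_add_self_sum_sq [CommSemiring R] (s : Finset ι) (f : ι → MvPolynomial σ R)
    {m : σ →₀ ℕ} (hm : ∀ i ∈ s, ∀ a ∈ (f i).support, ∀ b ∈ (f i).support, a + b = m + m → a = m) :
    coeff (m + m) (∑ i ∈ s, f i ^ 2) = ∑ i ∈ s, coeff m (f i) ^ 2 := by
  rw [coeff_sum]
  exact sum_congr rfl fun i hi => coeff_add_self_sq (f i) (hm i hi)

theorem exists_weight_max_not_midpoint [LinearOrder σ] (w : σ → ℤ) {S : Finset (σ →₀ ℕ)}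
    (hS : S.Nonempty) :
    ∃ m ∈ S, (∀ a ∈ S, Finsupp.weight w a ≤ Finsupp.weight w m) ∧
      ∀ a ∈ S, ∀ b ∈ S, a + b = m + m → a = m := by
  let key : (σ →₀ ℕ) → ℤ ×ₗ Lex (σ →₀ ℕ) := fun m => toLex (Finsupp.weight w m, toLex m)
  have key_add (a b : σ →₀ ℕ) : key (a + b) = key a + key b := by
    simp only [key, map_add]; rfl
  obtain ⟨m, hmS, hmax⟩ := S.exists_max_image key hS
  refine ⟨m, hmS, fun a ha => ?_, fun a ha b hb hab => ?_⟩
  · rcases Prod.Lex.le_iff.1 (hmax a ha) with h | ⟨h, -⟩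
    exacts [h.le, h.le]
  · by_contra hne
    have hlt : key a < key m :=
      (hmax a ha).lt_of_ne fun h => hne (toLex.injective (congrArg (fun p => (ofLex p).2) h))
    have := add_lt_add_of_lt_of_le hlt (hmax b hb)
    rw [← key_add, ← key_add, hab] at this
    exact this.false

theorem weight_le_of_sum_sq [CommRing R] [LinearOrder R] [IsStrictOrderedRing R] [LinearOrder σ]
    [Fintype ι] (f : ι → MvPolynomial σ R) (w : σ → ℤ) (c : ℤ)
    (h : ∀ m ∈ (∑ i, f i ^ 2).support, Finsupp.weight w m ≤ 2 * c) (i : ι) {m : σ →₀ ℕ}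
    (hm : m ∈ (f i).support) : Finsupp.weight w m ≤ c := by
  classical
  set S := univ.biUnion fun i => (f i).support
  have mem_S {j : ι} {a : σ →₀ ℕ} (ha : a ∈ (f j).support) : a ∈ S :=
    mem_biUnion.2 ⟨j, mem_univ _, ha⟩
  obtain ⟨m₀, hm₀, hmax, hmid⟩ := exists_weight_max_not_midpoint w ⟨m, mem_S hm⟩
  have hcoeff : coeff (m₀ + m₀) (∑ i, f i ^ 2) = ∑ i, coeff m₀ (f i) ^ 2 :=
    coeff_add_self_sum_sq _ f fun j _ a ha b hb => hmid a (mem_S ha) b (mem_S hb)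
  have hpos : 0 < ∑ i, coeff m₀ (f i) ^ 2 := by
    obtain ⟨j, -, hj⟩ := mem_biUnion.1 hm₀
    exact sum_pos' (fun _ _ => sq_nonneg _)
      ⟨j, mem_univ _, sq_pos_of_ne_zero (mem_support_iff.1 hj)⟩
  have h₀ := h (m₀ + m₀) (mem_support_iff.2 (hcoeff ▸ hpos.ne'))
  rw [map_add] at h₀
  linarith [hmax m (mem_S hm)]

end NewtonPolytope

noncomputable section Motzkin

variable {R ι : Type*}

def motzkin (R : Type*) [CommRing R] : MvPolynomial (Fin 3) R :=
  X 0 ^ 4 * X 1 ^ 2 + X 0 ^ 2 * X 1 ^ 4 + X 2 ^ 6 - 3 * (X 0 ^ 2 * X 1 ^ 2 * X 2 ^ 2)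

/-- Both steps are AM–GM: with `s = a b` and `t = z²`, `a⁴b² + a²b⁴ ≥ 2s³` and `2s³ + t³ ≥ 3s²t`. -/
theorem motzkin_nonneg_of_nonneg [CommRing R] [LinearOrder R] [IsStrictOrderedRing R] {a b : R}
    (ha : 0 ≤ a) (hb : 0 ≤ b) (z : R) :
    0 ≤ a ^ 4 * b ^ 2 + a ^ 2 * b ^ 4 + z ^ 6 - 3 * (a ^ 2 * b ^ 2 * z ^ 2) := by
  have h : a ^ 4 * b ^ 2 + a ^ 2 * b ^ 4 + z ^ 6 - 3 * (a ^ 2 * b ^ 2 * z ^ 2) =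
      (a * b) ^ 2 * (a - b) ^ 2 + (a * b - z ^ 2) ^ 2 * (2 * (a * b) + z ^ 2) := by ring
  rw [h]
  positivity

theorem motzkin_eval_nonneg [CommRing R] [LinearOrder R] [IsStrictOrderedRing R]
    (x : Fin 3 → R) : 0 ≤ eval x (motzkin R) := by
  have h := motzkin_nonneg_of_nonneg (abs_nonneg (x 0)) (abs_nonneg (x 1)) (x 2)
  simpa [motzkin, (by decide : Even 4).pow_abs] using h

def expVec (a b c : ℕ) : Fin 3 →₀ ℕ := Finsupp.equivFunOnFinite.symm ![a, b, c]

@[simp]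
theorem expVec_apply (a b c : ℕ) (i : Fin 3) : expVec a b c i = ![a, b, c] i := by
  simp [expVec]

theorem weight_fin_three (w : Fin 3 → ℤ) (m : Fin 3 →₀ ℕ) :
    Finsupp.weight w m = m 0 * w 0 + m 1 * w 1 + m 2 * w 2 := by
  simp [Finsupp.weight_apply, Finsupp.sum_fintype, Fin.sum_univ_three]

theorem eq_expVec_iff {a b c : ℕ} (m : Fin 3 →₀ ℕ) :
    m = expVec a b c ↔ m 0 = a ∧ m 1 = b ∧ m 2 = c := by
  refine ⟨by rintro rfl; simp, fun ⟨h₀, h₁, h₂⟩ => ?_⟩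
  ext j
  fin_cases j <;> simp [h₀, h₁, h₂]

@[simp]
theorem expVec_inj {a b c a' b' c' : ℕ} :
    expVec a b c = expVec a' b' c' ↔ a = a' ∧ b = b' ∧ c = c' := by
  simp [expVec]

theorem expVec_eq_single (a b c : ℕ) :
    expVec a b c = Finsupp.single 0 a + Finsupp.single 1 b + Finsupp.single 2 c := by
  ext i
  fin_cases i <;> simp

theorem motzkin_eq_sum_monomial [CommRing R] :
    motzkin R = monomial (expVec 4 2 0) 1 + monomial (expVec 2 4 0) 1 +
      monomial (expVec 0 0 6) 1 - monomial (expVec 2 2 2) 3 := by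
  simp only [motzkin, expVec_eq_single, X_pow_eq_monomial, monomial_mul, mul_one,
    Finsupp.single_zero, add_zero, zero_add]
  rw [← map_ofNat C 3, C_mul_monomial, mul_one]

theorem support_motzkin_subset [CommRing R] :
    (motzkin R).support ⊆ {expVec 4 2 0, expVec 2 4 0, expVec 0 0 6, expVec 2 2 2} := by
  intro m hm
  contrapose! hm
  obtain ⟨h₁, h₂, h₃, h₄⟩ : m ≠ expVec 4 2 0 ∧ m ≠ expVec 2 4 0 ∧ m ≠ expVec 0 0 6 ∧
      m ≠ expVec 2 2 2 := by simpa only [mem_insert, mem_singleton, not_or] using hm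
  simp [motzkin_eq_sum_monomial, coeff_monomial, h₁.symm, h₂.symm, h₃.symm, h₄.symm]

theorem coeff_motzkin_expVec_two_two_two [CommRing R] :
    coeff (expVec 2 2 2) (motzkin R) = -3 := by
  simp [motzkin_eq_sum_monomial, coeff_monomial]

variable [CommRing R] [LinearOrder R] [IsStrictOrderedRing R] [Fintype ι]

/-- Each inequality is a weight bound, valid on the support of the Motzkin polynomial, halved. -/
theorem mem_half_newton_polytope_of_motzkin_eq_sum_sq (f : ι → MvPolynomial (Fin 3) R)
    (hf : motzkin R = ∑ i, f i ^ 2) (i : ι) {m : Fin 3 →₀ ℕ} (hm : m ∈ (f i).support) :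
    m 0 + m 1 + m 2 = 3 ∧ m 0 ≤ 2 ∧ m 1 ≤ 2 ∧ 3 ≤ 4 * m 0 + m 2 ∧ 3 ≤ 4 * m 1 + m 2 := by
  have bound (w : Fin 3 → ℤ) (c : ℤ) (h₁ : 4 * w 0 + 2 * w 1 ≤ 2 * c)
      (h₂ : 2 * w 0 + 4 * w 1 ≤ 2 * c) (h₃ : 6 * w 2 ≤ 2 * c)
      (h₄ : 2 * w 0 + 2 * w 1 + 2 * w 2 ≤ 2 * c) :
      m 0 * w 0 + m 1 * w 1 + m 2 * w 2 ≤ c := by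
    rw [← weight_fin_three]
    refine weight_le_of_sum_sq f w c (hf ▸ fun e he => ?_) i hm
    have := support_motzkin_subset he
    simp only [mem_insert, mem_singleton] at this
    rcases this with rfl | rfl | rfl | rfl <;> simpa [weight_fin_three]
  have h₁ := bound ![1, 1, 1] 3 (by simp) (by simp) (by simp) (by simp)
  have h₂ := bound ![-1, -1, -1] (-3) (by simp) (by simp) (by simp) (by simp)
  have h₃ := bound ![1, 0, 0] 2 (by simp) (by simp) (by simp) (by simp)
  have h₄ := bound ![0, 1, 0] 2 (by simp) (by simp) (by simp) (by simp)
  have h₅ := bound ![-4, 0, -1] (-3) (by simp) (by simp) (by simp) (by simp)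
  have h₆ := bound ![0, -4, -1] (-3) (by simp) (by simp) (by simp) (by simp)
  simp only [Matrix.cons_val_zero, Matrix.cons_val_one, Matrix.cons_val] at h₁ h₂ h₃ h₄ h₅ h₆
  omega

theorem motzkin_ne_sum_sq (f : ι → MvPolynomial (Fin 3) R) : motzkin R ≠ ∑ i, f i ^ 2 := by
  intro hf
  have hmid : ∀ i ∈ univ, ∀ a ∈ (f i).support, ∀ b ∈ (f i).support,
      a + b = expVec 1 1 1 + expVec 1 1 1 → a = expVec 1 1 1 := by
    intro i _ a ha b hb hab
    have ha' := mem_half_newton_polytope_of_motzkin_eq_sum_sq f hf i ha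
    have hb' := mem_half_newton_polytope_of_motzkin_eq_sum_sq f hf i hb
    have hab' : a 0 + b 0 = 2 ∧ a 1 + b 1 = 2 ∧ a 2 + b 2 = 2 :=
      ⟨by simpa using congrArg (· 0) hab, by simpa using congrArg (· 1) hab,
        by simpa using congrArg (· 2) hab⟩
    rw [eq_expVec_iff]
    omega
  have hcoeff := coeff_add_self_sum_sq univ f hmid
  have h222 : expVec 1 1 1 + expVec 1 1 1 = expVec 2 2 2 := (eq_expVec_iff _).2 (by simp)
  rw [h222, ← hf, coeff_motzkin_expVec_two_two_two] at hcoeff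
  have : 0 ≤ ∑ i, coeff (expVec 1 1 1) (f i) ^ 2 := sum_nonneg fun i _ => sq_nonneg _
  linarith

end Motzkin

/-- the Motzkin polynomial `x⁴y² + x²y⁴ + z⁶ − 3x²y²z²` is non-negative on
all of `ℝ³` but is not a sum of squares of real polynomials. -/
theorem stmt_15 :
    (∀ x : Fin 3 → ℝ, 0 ≤ MvPolynomial.eval x
        (X 0 ^ 4 * X 1 ^ 2 + X 0 ^ 2 * X 1 ^ 4 + X 2 ^ 6
          - 3 * (X 0 ^ 2 * X 1 ^ 2 * X 2 ^ 2) : MvPolynomial (Fin 3) ℝ)) ∧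
      ¬ ∃ (K : ℕ) (f : Fin K → MvPolynomial (Fin 3) ℝ),
        (X 0 ^ 4 * X 1 ^ 2 + X 0 ^ 2 * X 1 ^ 4 + X 2 ^ 6
          - 3 * (X 0 ^ 2 * X 1 ^ 2 * X 2 ^ 2) : MvPolynomial (Fin 3) ℝ) = ∑ k, f k ^ 2 :=
  ⟨motzkin_eval_nonneg, fun ⟨_, f, hf⟩ => motzkin_ne_sum_sq f hf⟩
end

section
/- Let α ∈ ℕ^d with |α| = n ≥ 2 have at least two non-zero entries, and let l ≠ m be two indices with α_l ≥ 1 and α_m ≥ 1. Define the 2×2 matrix Q with Q_{ab} = binom(n−2, α − e_a − e_b)/binom(n,α) · 1[α ≥ e_a + e_b] for a,b ∈ {l,m}, where e_a is the a-th standard basis vector. Then Q_{ll} Q_{mm} < Q_{lm}^2; in particular Q is not positive semidefinite. -/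
/-!
Removing one particle of type `a` from `α` rescales the multinomial coefficient:
`|α| · M(α - e_a) = α_a · M(α)`. Applied twice, this gives the closed form
`q α a b = α_a (α_b - δ_ab) / (N (N - 1))` with `N = |α|`, valid for every `α` because the
numerator vanishes exactly when `α ≱ e_a + e_b`. The inequality then reads
`α_l (α_l - 1) α_m (α_m - 1) < α_l² α_m²`, and a symmetric `2 × 2` matrix with negative
determinant is not positive semidefinite.
-/

/-- The diagonal 2-body data of a pure Dicke state `|D_α⟩`:
`q α a b = binom(n−2, α − e_a − e_b)/binom(n, α)` when `α ≥ e_a + e_b` entrywise,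
and `0` otherwise. -/
noncomputable def q {d : ℕ} (α : Fin d → ℕ) (a b : Fin d) : ℝ :=
  if ∀ j, (if j = a then 1 else 0) + (if j = b then 1 else 0) ≤ α j then
    (((Nat.multinomial Finset.univ
          fun j => α j - ((if j = a then 1 else 0) + (if j = b then 1 else 0))) : ℕ) : ℝ) /
      ((Nat.multinomial Finset.univ α : ℕ) : ℝ)
  else 0

open Nat Finset

theorem Nat.sum_sub_single_one {ι : Type*} [DecidableEq ι] {s : Finset ι} {f : ι → ℕ} {a : ι}
    (ha : a ∈ s) (hfa : 1 ≤ f a) :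
    ∑ i ∈ s, (f - Pi.single a 1 : ι → ℕ) i = ∑ i ∈ s, f i - 1 := by
  have hle : ∀ i ∈ s, (Pi.single a 1 : ι → ℕ) i ≤ f i := by
    intro i _
    rcases eq_or_ne i a with rfl | hi <;> simp [*]
  simp only [Pi.sub_apply, sum_tsub_distrib s hle, sum_pi_single', if_pos ha]

theorem Nat.sum_mul_multinomial_sub_single_one {ι : Type*} [DecidableEq ι] {s : Finset ι}
    {f : ι → ℕ} {a : ι} (ha : a ∈ s) (hfa : 1 ≤ f a) :
    (∑ i ∈ s, f i) * multinomial s (f - Pi.single a 1) = f a * multinomial s f := by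
  set g := f - Pi.single a 1
  have hsum : ∑ i ∈ s, f i = ∑ i ∈ s, g i + 1 := by
    have hfa_le : f a ≤ ∑ i ∈ s, f i := single_le_sum (fun i _ => Nat.zero_le (f i)) ha
    rw [Nat.sum_sub_single_one ha hfa]
    omega
  have hprod : ∏ i ∈ s, (f i)! = f a * ∏ i ∈ s, (g i)! := by
    have hrest : ∏ i ∈ s.erase a, (g i)! = ∏ i ∈ s.erase a, (f i)! :=
      prod_congr rfl fun i hi => by simp [g, ne_of_mem_erase hi]
    rw [← mul_prod_erase s (fun i => (f i)!) ha, ← mul_prod_erase s (fun i => (g i)!) ha, hrest,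
      ← mul_assoc]
    simp [g, Nat.mul_factorial_pred (by omega : f a ≠ 0)]
  have hg := multinomial_spec s g
  have hf := multinomial_spec s f
  rw [hsum, factorial_succ, ← hg, hprod] at hf
  rw [hsum]
  apply Nat.eq_of_mul_eq_mul_left (prod_pos fun i _ => factorial_pos (g i))
  linarith

theorem q_eq_of_le {d : ℕ} (α : Fin d → ℕ) {a b : Fin d}
    (h : ∀ j, (if j = a then 1 else 0) + (if j = b then 1 else 0) ≤ α j) :
    q α a b = α a * (α b - if b = a then 1 else 0) /
      ((∑ j, α j : ℕ) * ((∑ j, α j : ℕ) - 1) : ℝ) := by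
  have hfun : (fun j => α j - ((if j = a then 1 else 0) + (if j = b then 1 else 0))) =
      α - Pi.single a 1 - Pi.single b 1 := by
    funext j; simp [Pi.single_apply, Nat.sub_sub]
  have hN : 2 ≤ ∑ j, α j := by
    simpa [sum_add_distrib] using sum_le_sum fun j (_ : j ∈ univ) => h j
  have ha : 1 ≤ α a := by simpa using (Nat.le_add_right _ _).trans (h a)
  have hb : 1 ≤ (α - Pi.single a 1 : Fin d → ℕ) b := by
    have := h b
    simp only [Pi.sub_apply, Pi.single_apply]
    split_ifs at this ⊢ <;> simp at this <;> omega
  have hb' : (((α - Pi.single a 1 : Fin d → ℕ) b : ℕ) : ℝ) = α b - if b = a then 1 else 0 := by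
    simp only [Pi.sub_apply, Pi.single_apply]
    split_ifs with hba
    · rw [Nat.cast_sub (hba ▸ ha), Nat.cast_one]
    · simp
  have h1 := congrArg (Nat.cast : ℕ → ℝ) <|
    Nat.sum_mul_multinomial_sub_single_one (mem_univ a) ha
  have h2 := congrArg (Nat.cast : ℕ → ℝ) <|
    Nat.sum_mul_multinomial_sub_single_one (mem_univ b) hb
  rw [Nat.sum_sub_single_one (mem_univ a) ha] at h2
  set N := ∑ j, α j
  have hN' : (2 : ℝ) ≤ N := mod_cast hN
  push_cast [Nat.cast_sub (by omega : 1 ≤ N), hb'] at h1 h2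
  rw [q, if_pos h, hfun, div_eq_div_iff (mod_cast (multinomial_pos _ _).ne') (by nlinarith)]
  linear_combination (N : ℝ) * h2 + (α b - if b = a then 1 else 0 : ℝ) * h1

theorem q_eq {d : ℕ} (α : Fin d → ℕ) (a b : Fin d) :
    q α a b = α a * (α b - if b = a then 1 else 0) /
      ((∑ j, α j : ℕ) * ((∑ j, α j : ℕ) - 1) : ℝ) := by
  by_cases h : ∀ j, (if j = a then 1 else 0) + (if j = b then 1 else 0) ≤ α j
  · exact q_eq_of_le α h
  obtain ⟨j, hj⟩ := not_forall.mp h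
  rw [q, if_neg h, eq_comm, div_eq_zero_iff]
  left
  split_ifs at hj with hja hjb hjb <;> subst_vars
  · obtain h0 | h0 : α j = 0 ∨ α j = 1 := by omega
    all_goals simp [h0]
  · simp [show α j = 0 by omega]
  · simp [hja, show α j = 0 by omega]
  · omega

theorem q_comm {d : ℕ} (α : Fin d → ℕ) (a b : Fin d) : q α a b = q α b a := by
  simp only [q, add_comm (if _ = a then 1 else 0)]

theorem stmt_18_general (d : ℕ) (α : Fin d → ℕ)
    (l m : Fin d) (hlm : l ≠ m) (hl : 1 ≤ α l) (hm : 1 ≤ α m) :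
    q α l l * q α m m < q α l m ^ 2 ∧
      ¬ (!![q α l l, q α l m; q α m l, q α m m] : Matrix (Fin 2) (Fin 2) ℝ).PosSemidef := by
  have hlt : q α l l * q α m m < q α l m ^ 2 := by
    have hN : α l + α m ≤ ∑ j, α j :=
      (sum_pair hlm).symm.le.trans (sum_le_sum_of_subset (subset_univ _))
    have hl' : (1 : ℝ) ≤ α l := mod_cast hl
    have hm' : (1 : ℝ) ≤ α m := mod_cast hm
    have hN' : (α l + α m : ℝ) ≤ (∑ j, α j : ℕ) := mod_cast hN
    simp only [q_eq, ↓reduceIte, if_neg hlm.symm, sub_zero]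
    set N : ℝ := ((∑ j, α j : ℕ) : ℝ)
    have hD : 0 < N * (N - 1) := by nlinarith
    rw [_root_.div_mul_div_comm, div_pow, ← sq, div_lt_div_iff_of_pos_right (pow_pos hD 2)]
    nlinarith [mul_pos (by linarith : (0:ℝ) < α l) (by linarith : (0:ℝ) < α m)]
  refine ⟨hlt, fun hpsd => ?_⟩
  have hdet := hpsd.det_nonneg
  rw [Matrix.det_fin_two_of, q_comm α m l] at hdet
  linarith

/-- for `α` with `|α| = n ≥ 2` and two distinct indices `l ≠ m` with
`α_l, α_m ≥ 1`, one has `Q_{ll}·Q_{mm} < Q_{lm}²`; in particular the corresponding `2 × 2`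
matrix is not positive semidefinite. -/
theorem stmt_18 (d n : ℕ) (α : Fin d → ℕ) (hn : 2 ≤ n) (hα : ∑ j, α j = n)
    (l m : Fin d) (hlm : l ≠ m) (hl : 1 ≤ α l) (hm : 1 ≤ α m) :
    q α l l * q α m m < q α l m ^ 2 ∧
      ¬ (!![q α l l, q α l m; q α m l, q α m m] : Matrix (Fin 2) (Fin 2) ℝ).PosSemidef :=
  stmt_18_general d α l m hlm hl hm
end
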